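/- Counting lemma for dyadic intervals with bounded overlap: fix ℓ ≥ 0 and let Ω ⊆ ℝ be an open set. Let 𝓘_ℓ be the set of dyadic intervals I such that 2^ℓ I ⊆ Ω but 2^{ℓ+1} I ⊄ Ω (dilations with respect to the center). Then for any dyadic I ∈ 𝓘_ℓ and any j > 0, there are at most 2 intervals I' ∈ 𝓘_ℓ with I' ⊆ I and |I'| = 2^{-j}|I|; consequently ∑_{I ∈ 𝓘_ℓ} |I| ≤ C |Ω| for an absolute constant C. -/

import Mathlib

open MeasureTheory
open scoped ENNReal

/-- The dyadic interval `[2^k m, 2^k (m+1))`. -/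
def dyadicI (k m : ℤ) : Set ℝ := Set.Ico ((2 : ℝ) ^ k * m) ((2 : ℝ) ^ k * (m + 1))

/-- The `2^j`-dilate (with respect to its center) of the dyadic interval `[2^k m, 2^k(m+1))`. -/
def dilI (j : ℕ) (k m : ℤ) : Set ℝ :=
  Set.Ico ((2 : ℝ) ^ k * ((m : ℝ) + 1 / 2) - (2 : ℝ) ^ (j : ℤ) * (2 : ℝ) ^ k / 2)
    ((2 : ℝ) ^ k * ((m : ℝ) + 1 / 2) + (2 : ℝ) ^ (j : ℤ) * (2 : ℝ) ^ k / 2)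

/-- The collection `𝓘_ℓ` of dyadic intervals `I` (indexed by `(k,m)`) with
`2^ℓ I ⊆ Ω` but `2^{ℓ+1} I ⊄ Ω`. -/
def dyadicFamily (ℓ : ℕ) (Ω : Set ℝ) : Set (ℤ × ℤ) :=
  {p | dilI ℓ p.1 p.2 ⊆ Ω ∧ ¬ dilI (ℓ + 1) p.1 p.2 ⊆ Ω}

/-!
A member `I'` of `𝓘_ℓ` lying in `I ∈ 𝓘_ℓ` at a smaller scale, but neither the leftmost nor the
rightmost dyadic subinterval of `I` of its length, has dyadic neighbours inside `I` on both sides;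
then `2^{ℓ+1} I' ⊆ 2^ℓ I ⊆ Ω`, contradicting `I' ∈ 𝓘_ℓ`. So the members of `𝓘_ℓ` inside `I` have
total length at most `|I| + 2 ∑_{j ≥ 1} 2^{-j} |I| = 3 |I|`. Dyadic intervals are nested or
disjoint, so the maximal members of a finite subfamily are disjoint subsets of `Ω`, and summing
over them gives `∑ |I| ≤ 3 |Ω|`.
-/

open Classical Finset in
theorem Finset.sum_measure_le_of_packing {ι α : Type*} [MeasurableSpace α] {μ : Measure α}
    {S : Finset ι} {I : ι → Set α} {c : ℝ≥0∞}
    (hmeas : ∀ i ∈ S, MeasurableSet (I i)) (hinj : Set.InjOn I S)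
    (hlam : ∀ i ∈ S, ∀ j ∈ S, I i ⊆ I j ∨ I j ⊆ I i ∨ Disjoint (I i) (I j))
    (hpack : ∀ i ∈ S, ∑ j ∈ S with I j ⊆ I i, μ (I j) ≤ c * μ (I i)) :
    ∑ i ∈ S, μ (I i) ≤ c * μ (⋃ i ∈ S, I i) := by
  set M := S.filter fun i => ∀ j ∈ S, I i ⊆ I j → j = i
  have exists_maximal_superset : ∀ i ∈ S, ∃ q ∈ M, I i ⊆ I q := by
    intro i hi
    obtain ⟨q, hqS, hmax⟩ :=
      (S.filter fun j => I i ⊆ I j).exists_maximalFor I ⟨i, mem_filter.2 ⟨hi, subset_rfl⟩⟩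
    refine ⟨q, mem_filter.2 ⟨(mem_filter.1 hqS).1, fun j hj hqj => ?_⟩, (mem_filter.1 hqS).2⟩
    exact hinj hj (mem_filter.1 hqS).1
      ((hmax (mem_filter.2 ⟨hj, (mem_filter.1 hqS).2.trans hqj⟩) hqj).antisymm hqj)
  have disjoint_maximal : (M : Set ι).PairwiseDisjoint I := by
    intro i hi j hj hij
    obtain ⟨hiS, hi⟩ := mem_filter.1 hi
    obtain ⟨hjS, hj⟩ := mem_filter.1 hj
    rcases hlam i hiS j hjS with h | h | h
    · exact absurd (hi j hjS h) (Ne.symm hij)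
    · exact absurd (hj i hiS h) hij
    · exact h
  calc ∑ i ∈ S, μ (I i)
      ≤ ∑ i ∈ S, ∑ q ∈ M, if I i ⊆ I q then μ (I i) else 0 := by
        refine sum_le_sum fun i hi => ?_
        obtain ⟨q, hqM, hiq⟩ := exists_maximal_superset i hi
        simpa [hiq] using single_le_sum (f := fun q => if I i ⊆ I q then μ (I i) else 0)
          (fun _ _ => zero_le) hqM
    _ = ∑ q ∈ M, ∑ i ∈ S with I i ⊆ I q, μ (I i) := by
        rw [sum_comm]; simp only [sum_filter]
    _ ≤ ∑ q ∈ M, c * μ (I q) := sum_le_sum fun q hq => hpack q (mem_filter.1 hq).1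
    _ = c * μ (⋃ q ∈ M, I q) := by
        rw [← mul_sum, measure_biUnion_finset disjoint_maximal
          fun q hq => hmeas q (mem_filter.1 hq).1]
    _ ≤ c * μ (⋃ i ∈ S, I i) := by
        gcongr c * μ ?_
        exact Set.biUnion_subset_biUnion_left (coe_subset.2 (filter_subset _ S))

lemma sum_two_zpow_le_of_lt (K : Finset ℤ) {k : ℤ} (hK : ∀ s ∈ K, s < k) :
    ∑ s ∈ K, (2 : ℝ) ^ s ≤ 2 ^ k := by
  induction K using Finset.induction_on_max generalizing k with
  | empty => simp [zpow_nonneg]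
  | insert a K hlt ih =>
    have ha := hK a (Finset.mem_insert_self a K)
    calc ∑ s ∈ insert a K, (2 : ℝ) ^ s
        = 2 ^ a + ∑ s ∈ K, (2 : ℝ) ^ s :=
          Finset.sum_insert fun haK => (hlt a haK).false
      _ ≤ 2 ^ a + 2 ^ a := by gcongr; exact ih hlt
      _ = 2 ^ (a + 1) := by rw [zpow_add_one₀ two_ne_zero]; ring
      _ ≤ 2 ^ k := zpow_le_zpow_right₀ one_le_two ha

open Finset in
lemma sum_two_zpow_le_three_mul {α : Type*} (T : Finset α) (f : α → ℤ) {k : ℤ}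
    (hle : ∀ p ∈ T, f p ≤ k) (htop : #{p ∈ T | f p = k} ≤ 1)
    (hbelow : ∀ s < k, #{p ∈ T | f p = s} ≤ 2) :
    ∑ p ∈ T, (2 : ℝ) ^ f p ≤ 3 * 2 ^ k := by
  set K := T.image f
  have hlt : ∀ s ∈ K.erase k, s < k := fun s hs => by
    obtain ⟨p, hp, rfl⟩ := mem_image.1 (mem_of_mem_erase hs)
    exact (hle p hp).lt_of_ne (ne_of_mem_erase hs)
  calc ∑ p ∈ T, (2 : ℝ) ^ f p
      = ∑ s ∈ K, #{p ∈ T | f p = s} • (2 : ℝ) ^ s := sum_comp _ _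
    _ ≤ ∑ s ∈ insert k (K.erase k), #{p ∈ T | f p = s} • (2 : ℝ) ^ s :=
        sum_le_sum_of_subset_of_nonneg (insert_erase_subset k K) fun _ _ _ => by positivity
    _ = #{p ∈ T | f p = k} • (2 : ℝ) ^ k + ∑ s ∈ K.erase k, #{p ∈ T | f p = s} • (2 : ℝ) ^ s :=
        sum_insert (notMem_erase k K)
    _ ≤ 1 • (2 : ℝ) ^ k + ∑ s ∈ K.erase k, 2 • (2 : ℝ) ^ s := by
        gcongr with s hs
        exact hbelow s (hlt s hs)
    _ ≤ 2 ^ k + 2 • 2 ^ k := by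
        rw [one_smul, ← smul_sum]
        gcongr
        exact sum_two_zpow_le_of_lt _ hlt
    _ = 3 * 2 ^ k := by rw [two_nsmul]; ring

lemma volume_dyadicI (k m : ℤ) : volume (dyadicI k m) = ENNReal.ofReal (2 ^ k) := by
  rw [dyadicI, Real.volume_Ico]
  ring_nf

lemma mem_dyadicI_iff {k m : ℤ} {x : ℝ} : x ∈ dyadicI k m ↔ ⌊x / 2 ^ k⌋ = m := by
  have h := zpow_pos (two_pos : (0 : ℝ) < 2) k
  rw [dyadicI, Set.mem_Ico, Int.floor_eq_iff, le_div_iff₀ h, div_lt_iff₀ h, mul_comm (m : ℝ),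
    mul_comm ((m : ℝ) + 1)]

lemma floor_div_two_zpow (x : ℝ) (k : ℤ) (n : ℕ) :
    ⌊x / 2 ^ k⌋ = ⌊x / 2 ^ (k - n)⌋ / 2 ^ n := by
  have h : x / 2 ^ k = x / 2 ^ (k - n) / ((2 ^ n : ℕ) : ℝ) := by
    rw [div_div, Nat.cast_pow, Nat.cast_ofNat, ← zpow_natCast, ← zpow_add₀ two_ne_zero,
      sub_add_cancel]
  rw [h, Int.floor_div_natCast]
  norm_cast

lemma dyadicI_sub_subset_iff {k m m' : ℤ} (n : ℕ) :
    dyadicI (k - n) m' ⊆ dyadicI k m ↔ m' / 2 ^ n = m := by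
  constructor
  · intro h
    have hx : (2 : ℝ) ^ (k - n) * m' ∈ dyadicI (k - n) m' := by
      rw [mem_dyadicI_iff, mul_div_cancel_left₀ _ (zpow_ne_zero _ two_ne_zero), Int.floor_intCast]
    have := mem_dyadicI_iff.1 (h hx)
    rwa [floor_div_two_zpow _ k n, mem_dyadicI_iff.1 hx] at this
  · intro h x hx
    rw [mem_dyadicI_iff, floor_div_two_zpow x k n, mem_dyadicI_iff.1 hx, h]

lemma dyadicI_subset_of_le_of_not_disjoint {k k' m m' : ℤ} (hk : k' ≤ k)
    (h : ¬Disjoint (dyadicI k' m') (dyadicI k m)) : dyadicI k' m' ⊆ dyadicI k m := by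
  obtain ⟨n, rfl⟩ : ∃ n : ℕ, k' = k - n := ⟨(k - k').toNat, by omega⟩
  obtain ⟨x, hx', hx⟩ := Set.not_disjoint_iff.1 h
  rw [dyadicI_sub_subset_iff, ← mem_dyadicI_iff.1 hx, ← mem_dyadicI_iff.1 hx',
    floor_div_two_zpow x k n]

lemma dyadicI_subset_or_subset_or_disjoint (p q : ℤ × ℤ) :
    dyadicI p.1 p.2 ⊆ dyadicI q.1 q.2 ∨ dyadicI q.1 q.2 ⊆ dyadicI p.1 p.2 ∨
      Disjoint (dyadicI p.1 p.2) (dyadicI q.1 q.2) := by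
  by_cases h : Disjoint (dyadicI p.1 p.2) (dyadicI q.1 q.2)
  · exact Or.inr (Or.inr h)
  rcases le_total p.1 q.1 with hpq | hqp
  · exact Or.inl (dyadicI_subset_of_le_of_not_disjoint hpq h)
  · exact Or.inr (Or.inl (dyadicI_subset_of_le_of_not_disjoint hqp fun h' => h h'.symm))

lemma scale_le_of_dyadicI_subset {k k' m m' : ℤ} (h : dyadicI k' m' ⊆ dyadicI k m) : k' ≤ k := by
  have := measure_mono (μ := volume) h
  rw [volume_dyadicI, volume_dyadicI,
    ENNReal.ofReal_le_ofReal_iff (zpow_pos two_pos k).le] at this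
  exact (zpow_le_zpow_iff_right₀ one_lt_two).1 this

lemma eq_of_dyadicI_subset {k m m' : ℤ} (h : dyadicI k m' ⊆ dyadicI k m) : m' = m := by
  simpa using (dyadicI_sub_subset_iff (k := k) 0).1 (by simpa using h)

lemma injective_dyadicI : Function.Injective fun p : ℤ × ℤ => dyadicI p.1 p.2 := by
  intro p q h
  have hk : p.1 = q.1 :=
    (scale_le_of_dyadicI_subset h.le).antisymm (scale_le_of_dyadicI_subset h.ge)
  simp only at h
  rw [hk] at h
  exact Prod.ext hk (eq_of_dyadicI_subset h.le)

lemma dyadicI_subset_dilI (ℓ : ℕ) (k m : ℤ) : dyadicI k m ⊆ dilI ℓ k m := by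
  have hr := zpow_pos (two_pos : (0 : ℝ) < 2) k
  have hA : (1 : ℝ) ≤ 2 ^ (ℓ : ℤ) := one_le_zpow₀ one_le_two (Int.natCast_nonneg ℓ)
  apply Set.Ico_subset_Ico <;> nlinarith [mul_nonneg (sub_nonneg.2 hA) hr.le]

lemma dilI_succ_subset_dilI {ℓ n : ℕ} {k m m' : ℤ} (hn : 0 < n) (hleft : 2 ^ n * m < m')
    (hright : m' + 1 < 2 ^ n * (m + 1)) : dilI (ℓ + 1) (k - n) m' ⊆ dilI ℓ k m := by
  have hr := zpow_pos (two_pos : (0 : ℝ) < 2) (k - n)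
  have hA : (1 : ℝ) ≤ 2 ^ (ℓ : ℤ) := one_le_zpow₀ one_le_two (Int.natCast_nonneg ℓ)
  have hB : (2 : ℝ) ≤ 2 ^ n := le_self_pow₀ one_le_two hn.ne'
  have hk : (2 : ℝ) ^ k = 2 ^ (k - n) * 2 ^ n := by
    rw [← zpow_natCast, ← zpow_add₀ two_ne_zero, sub_add_cancel]
  have hℓ : (2 : ℝ) ^ ((ℓ + 1 : ℕ) : ℤ) = 2 * 2 ^ (ℓ : ℤ) := by
    rw [Nat.cast_succ, zpow_add_one₀ two_ne_zero, mul_comm]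
  have hleft' : (2 : ℝ) ^ n * m + 1 ≤ m' := by exact_mod_cast hleft
  have hright' : (m' : ℝ) + 2 ≤ 2 ^ n * (m + 1) := by
    exact_mod_cast (show m' + 2 ≤ 2 ^ n * (m + 1) by omega)
  rw [dilI, dilI, hk, hℓ]
  apply Set.Ico_subset_Ico <;>
    nlinarith [mul_nonneg (mul_nonneg hr.le (sub_nonneg.2 hA)) (sub_nonneg.2 hB),
      mul_le_mul_of_nonneg_left hleft' hr.le, mul_le_mul_of_nonneg_left hright' hr.le]

lemma eq_or_eq_of_mem_dyadicFamily_of_subset {ℓ n : ℕ} {Ω : Set ℝ} {k m m' : ℤ}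
    (hI : (k, m) ∈ dyadicFamily ℓ Ω) (hI' : (k - n, m') ∈ dyadicFamily ℓ Ω) (hn : 0 < n)
    (hsub : dyadicI (k - n) m' ⊆ dyadicI k m) : m' = 2 ^ n * m ∨ m' = 2 ^ n * (m + 1) - 1 := by
  rw [dyadicI_sub_subset_iff, Int.ediv_eq_iff_of_pos (by positivity), mul_comm m] at hsub
  have hB : (2 : ℤ) ^ n * (m + 1) = 2 ^ n * m + 2 ^ n := by ring
  by_contra! h
  exact hI'.2 ((dilI_succ_subset_dilI (m := m) hn (by omega) (by omega)).trans hI.1)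

lemma card_le_two_of_mem_dyadicFamily {ℓ n : ℕ} {Ω : Set ℝ} {k m : ℤ}
    (hI : (k, m) ∈ dyadicFamily ℓ Ω) (hn : 0 < n) {S : Finset ℤ}
    (hS : ∀ m' ∈ S, (k - n, m') ∈ dyadicFamily ℓ Ω ∧ dyadicI (k - n) m' ⊆ dyadicI k m) :
    S.card ≤ 2 := by
  refine (Finset.card_le_card (t := {2 ^ n * m, 2 ^ n * (m + 1) - 1}) fun m' hm' => ?_).trans
    Finset.card_le_two
  obtain ⟨hI', hsub⟩ := hS m' hm'
  rcases eq_or_eq_of_mem_dyadicFamily_of_subset hI hI' hn hsub with rfl | rfl <;> simp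

lemma sum_volume_dyadicI_le_three_mul {ℓ : ℕ} {Ω : Set ℝ} {q : ℤ × ℤ}
    (hq : q ∈ dyadicFamily ℓ Ω) (T : Finset (ℤ × ℤ))
    (hT : ∀ p ∈ T, p ∈ dyadicFamily ℓ Ω ∧ dyadicI p.1 p.2 ⊆ dyadicI q.1 q.2) :
    ∑ p ∈ T, volume (dyadicI p.1 p.2) ≤ 3 * volume (dyadicI q.1 q.2) := by
  have hreal : ∑ p ∈ T, (2 : ℝ) ^ p.1 ≤ 3 * 2 ^ q.1 := by
    refine sum_two_zpow_le_three_mul T Prod.fst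
      (fun p hp => scale_le_of_dyadicI_subset (hT p hp).2) ?_ fun s hs => ?_
    · refine (Finset.card_le_card (t := {q}) fun p hp => ?_).trans (Finset.card_singleton q).le
      obtain ⟨hpT, hpq⟩ := Finset.mem_filter.1 hp
      have hsub := (hT p hpT).2
      rw [hpq] at hsub
      exact Finset.mem_singleton.2 (Prod.ext hpq (eq_of_dyadicI_subset hsub))
    · obtain ⟨n, hn, rfl⟩ : ∃ n : ℕ, 0 < n ∧ s = q.1 - n := ⟨(q.1 - s).toNat, by omega, by omega⟩
      have hinj : Set.InjOn Prod.snd (T.filter fun p => p.1 = q.1 - n : Set (ℤ × ℤ)) := by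
        rintro a ha b hb h
        simp only [Finset.mem_coe, Finset.mem_filter] at ha hb
        exact Prod.ext (ha.2.trans hb.2.symm) h
      rw [← Finset.card_image_of_injOn hinj]
      refine card_le_two_of_mem_dyadicFamily hq hn fun m' hm' => ?_
      obtain ⟨p, hp, rfl⟩ := Finset.mem_image.1 hm'
      obtain ⟨hpT, hps⟩ := Finset.mem_filter.1 hp
      rw [← hps]
      exact hT p hpT
  simp only [volume_dyadicI]
  rw [← ENNReal.ofReal_sum_of_nonneg fun p _ => (zpow_pos two_pos p.1).le, ← ENNReal.ofReal_ofNat 3,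
    ← ENNReal.ofReal_mul zero_le_three]
  exact ENNReal.ofReal_le_ofReal hreal

/-- Counting lemma for dyadic intervals with bounded overlap: within any `I ∈ 𝓘_ℓ` there are
at most 2 intervals of `𝓘_ℓ` of each fixed smaller scale, and `∑_{I ∈ 𝓘_ℓ} |I| ≤ C |Ω|`. -/
theorem dyadic_counting_lemma :
    ∃ C : ℝ, 0 < C ∧ ∀ (ℓ : ℕ) (Ω : Set ℝ), IsOpen Ω →
      (∀ k m : ℤ, (k, m) ∈ dyadicFamily ℓ Ω → ∀ j : ℤ, 0 < j →
        ∀ S : Finset ℤ,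
          (∀ m' ∈ S, (k - j, m') ∈ dyadicFamily ℓ Ω ∧ dyadicI (k - j) m' ⊆ dyadicI k m) →
          S.card ≤ 2) ∧
      (∀ S : Finset (ℤ × ℤ), (∀ p ∈ S, p ∈ dyadicFamily ℓ Ω) →
        ∑ p ∈ S, ENNReal.ofReal ((2 : ℝ) ^ p.1) ≤ ENNReal.ofReal C * volume Ω) := by
  refine ⟨3, three_pos, fun ℓ Ω _ => ⟨fun k m hI j hj S hS => ?_, fun S hS => ?_⟩⟩
  · lift j to ℕ using hj.le
    exact card_le_two_of_mem_dyadicFamily hI (by exact_mod_cast hj) hS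
  · classical
    calc ∑ p ∈ S, ENNReal.ofReal ((2 : ℝ) ^ p.1)
        = ∑ p ∈ S, volume (dyadicI p.1 p.2) := by simp only [volume_dyadicI]
      _ ≤ 3 * volume (⋃ p ∈ S, dyadicI p.1 p.2) :=
          Finset.sum_measure_le_of_packing (fun _ _ => measurableSet_Ico) injective_dyadicI.injOn
            (fun p _ q _ => dyadicI_subset_or_subset_or_disjoint p q) fun q hq =>
              sum_volume_dyadicI_le_three_mul (hS q hq) _ fun p hp =>
                ⟨hS p (Finset.mem_filter.1 hp).1, (Finset.mem_filter.1 hp).2⟩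
      _ ≤ ENNReal.ofReal 3 * volume Ω := by
          rw [ENNReal.ofReal_ofNat]
          gcongr
          exact Set.iUnion₂_subset fun p hp => (dyadicI_subset_dilI ℓ p.1 p.2).trans (hS p hp).1
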